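/- arXiv:1412.0265 — 3 statements merged into one kernel-verified Lean document; each statement's English description precedes it below -/
import Mathlib

section
/- Let (M,d) be a metric space such that there exists a real inner product space V and a map ψ : M → V with d(x,y) = ‖ψ(x) − ψ(y)‖ for all x,y ∈ M. Then the Gaussian kernel k(x,y) = exp(−γ d(x,y)²) is positive definite for every γ > 0. -/
def IsPosDefKernel {X : Type*} (k : X → X → ℝ) : Prop :=
  (∀ x y, k x y = k y x) ∧
  ∀ (m : ℕ) (x : Fin m → X) (c : Fin m → ℝ),
    0 ≤ ∑ i, ∑ j, c i * c j * k (x i) (x j)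

/-!
Every finite configuration of points of `V` lies in a finite-dimensional subspace, so it suffices
to treat a finite-dimensional inner product space. There the Gaussian is, up to a positive constant,
a convolution square: by Apollonius' theorem
`e^{-2γ d(v,a)²} e^{-2γ d(v,b)²} = e^{-γ d(a,b)²} e^{-4γ d(v, (a+b)/2)²}`, and integrating over `v`
writes `∑ cᵢ cⱼ e^{-γ d(xᵢ,xⱼ)²}` as a positive multiple of `∫ (∑ cᵢ e^{-2γ d(v,xᵢ)²})² dv ≥ 0`.
-/

open Real MeasureTheory

theorem sum_sum_mul_integral_mul_nonneg {α ι : Type*} [MeasurableSpace α] {μ : Measure α}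
    [Fintype ι] (f : ι → α → ℝ) (hf : ∀ i j, Integrable (fun v ↦ f i v * f j v) μ)
    (c : ι → ℝ) :
    0 ≤ ∑ i, ∑ j, c i * c j * ∫ v, f i v * f j v ∂μ := by
  have hterm : ∀ i j, Integrable (fun v ↦ c i * f i v * (c j * f j v)) μ := fun i j ↦
    ((hf i j).const_mul (c i * c j)).congr (.of_forall fun v ↦ by ring)
  have hsq : ∑ i, ∑ j, c i * c j * ∫ v, f i v * f j v ∂μ = ∫ v, (∑ i, c i * f i v) ^ 2 ∂μ := by
    simp_rw [sq, Finset.sum_mul_sum]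
    rw [integral_finsetSum _ fun i _ ↦ integrable_finsetSum _ fun j _ ↦ hterm i j]
    refine Finset.sum_congr rfl fun i _ ↦ ?_
    rw [integral_finsetSum _ fun j _ ↦ hterm i j]
    refine Finset.sum_congr rfl fun j _ ↦ ?_
    rw [← integral_const_mul]
    exact integral_congr_ae (.of_forall fun v ↦ by ring)
  exact hsq ▸ integral_nonneg fun v ↦ sq_nonneg _

section Gaussian

variable {V : Type*} [NormedAddCommGroup V] [InnerProductSpace ℝ V]

theorem exp_mul_exp_neg_dist_sq_eq (γ : ℝ) (a b v : V) :
    rexp (-(2 * γ) * dist v a ^ 2) * rexp (-(2 * γ) * dist v b ^ 2) =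
      rexp (-γ * dist a b ^ 2) * rexp (-(4 * γ) * dist v (midpoint ℝ a b) ^ 2) := by
  rw [← exp_add, ← exp_add]
  have := EuclideanGeometry.dist_sq_add_dist_sq_eq_two_mul_dist_midpoint_sq_add_half_dist_sq v a b
  congr 1
  linear_combination (-(2 * γ)) * this

variable [FiniteDimensional ℝ V] [MeasurableSpace V] [BorelSpace V]

theorem integral_exp_neg_mul_norm_sq_pos {b : ℝ} (hb : 0 < b) :
    0 < ∫ v : V, rexp (-b * ‖v‖ ^ 2) := by
  rw [GaussianFourier.integral_rexp_neg_mul_sq_norm hb]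
  positivity

theorem integrable_exp_neg_mul_dist_sq {b : ℝ} (hb : 0 < b) (a : V) :
    Integrable fun v : V ↦ rexp (-b * dist v a ^ 2) := by
  simp_rw [dist_eq_norm]
  exact (Integrable.of_integral_ne_zero (integral_exp_neg_mul_norm_sq_pos hb).ne').comp_sub_right a

theorem integral_exp_mul_exp_neg_dist_sq (γ : ℝ) (a b : V) :
    ∫ v : V, rexp (-(2 * γ) * dist v a ^ 2) * rexp (-(2 * γ) * dist v b ^ 2) =
      rexp (-γ * dist a b ^ 2) * ∫ v : V, rexp (-(4 * γ) * ‖v‖ ^ 2) := by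
  simp_rw [exp_mul_exp_neg_dist_sq_eq, dist_eq_norm]
  rw [integral_const_mul, integral_sub_right_eq_self (fun v ↦ rexp (-(4 * γ) * ‖v‖ ^ 2))]

end Gaussian

theorem isPosDefKernel_exp_neg_mul_dist_sq {V : Type*} [NormedAddCommGroup V]
    [InnerProductSpace ℝ V] [FiniteDimensional ℝ V] {γ : ℝ} (hγ : 0 < γ) :
    IsPosDefKernel fun a b : V ↦ rexp (-γ * dist a b ^ 2) := by
  refine ⟨fun a b ↦ by simp only [dist_comm], fun m x c ↦ ?_⟩
  let _ : MeasurableSpace V := borel V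
  have : BorelSpace V := ⟨rfl⟩
  set C := ∫ v : V, rexp (-(4 * γ) * ‖v‖ ^ 2)
  have hC : 0 < C := integral_exp_neg_mul_norm_sq_pos (by positivity)
  have hint : ∀ i j, Integrable fun v : V ↦
      rexp (-(2 * γ) * dist v (x i) ^ 2) * rexp (-(2 * γ) * dist v (x j) ^ 2) := by
    intro i j
    simp_rw [exp_mul_exp_neg_dist_sq_eq]
    exact (integrable_exp_neg_mul_dist_sq (by positivity) _).const_mul _
  have hnonneg := sum_sum_mul_integral_mul_nonneg _ hint c
  simp_rw [integral_exp_mul_exp_neg_dist_sq, ← mul_assoc, ← Finset.sum_mul] at hnonneg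
  exact nonneg_of_mul_nonneg_left hnonneg hC

theorem gaussian_posdef_of_hilbert_embedding
    {M : Type*} [MetricSpace M] {V : Type*} [NormedAddCommGroup V] [InnerProductSpace ℝ V]
    (ψ : M → V) (hψ : ∀ x y : M, dist x y = ‖ψ x - ψ y‖) :
    ∀ γ : ℝ, 0 < γ →
      IsPosDefKernel (fun x y : M => Real.exp (-γ * dist x y ^ 2)) := by
  intro γ hγ
  refine ⟨fun x y ↦ by simp only [dist_comm], fun m x c ↦ ?_⟩
  let W := Submodule.span ℝ (Set.range (ψ ∘ x))
  have : FiniteDimensional ℝ W := FiniteDimensional.span_of_finite ℝ (Set.finite_range _)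
  let y : Fin m → W := fun i ↦ ⟨ψ (x i), Submodule.subset_span ⟨i, rfl⟩⟩
  have hdist : ∀ i j, dist (x i) (x j) = dist (y i) (y j) := fun i j ↦ by
    rw [hψ, dist_eq_norm]
    rfl
  simpa only [hdist] using (isPosDefKernel_exp_neg_mul_dist_sq (V := W) hγ).2 m y c
end

section
/- Let (M,d) be a metric space. If the Gaussian kernel k(x,y) = exp(−γ d(x,y)²) is positive definite for all γ > 0, then there exist a real inner product space V and a map ψ : M → V such that d(x,y) = ‖ψ(x) − ψ(y)‖ for all x,y ∈ M. -/
universe u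

/-!
Letting `γ → 0⁺` in the positive definiteness of `exp (-γ d²)` shows that `d²` is negative
definite (Schoenberg). Centering `d²` at a base point `x₀` turns it into the positive definite
kernel `(d(x,x₀)² + d(y,x₀)² - d(x,y)²) / 2`, and the feature map of its reproducing kernel
Hilbert space (Moore's theorem) is then an isometric embedding.
-/

open Filter Topology Finset

def IsNegDefKernel {X : Type*} (f : X → X → ℝ) : Prop :=
  (∀ x y, f x y = f y x) ∧
  ∀ (m : ℕ) (x : Fin m → X) (c : Fin m → ℝ), ∑ i, c i = 0 →
    ∑ i, ∑ j, c i * c j * f (x i) (x j) ≤ 0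

theorem tendsto_one_sub_exp_neg_mul_div (t : ℝ) :
    Tendsto (fun γ : ℝ => (1 - Real.exp (-γ * t)) / γ) (𝓝[>] 0) (𝓝 t) := by
  have hderiv : HasDerivAt (fun γ : ℝ => 1 - Real.exp (-γ * t)) t 0 := by
    simpa using (((hasDerivAt_id (0 : ℝ)).neg.mul_const t).exp.const_sub 1)
  refine ((hasDerivAt_iff_tendsto_slope.1 hderiv).mono_left
    (nhdsWithin_mono 0 fun _ hγ => ne_of_gt hγ)).congr' ?_
  filter_upwards with γ
  simp [slope_def_field]

theorem IsNegDefKernel.of_isPosDefKernel_exp {X : Type*} {f : X → X → ℝ}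
    (h : ∀ γ : ℝ, 0 < γ → IsPosDefKernel fun x y => Real.exp (-γ * f x y)) :
    IsNegDefKernel f := by
  refine ⟨fun x y => ?_, fun m x c hc => ?_⟩
  · simpa using (h 1 one_pos).1 x y
  refine le_of_tendsto (tendsto_finsetSum _ fun i _ => tendsto_finsetSum _ fun j _ =>
    (tendsto_one_sub_exp_neg_mul_div (f (x i) (x j))).const_mul (c i * c j)) ?_
  filter_upwards [self_mem_nhdsWithin] with γ (hγ : 0 < γ)
  -- with `∑ i, c i = 0` the constant `1` drops out of the quadratic form
  have hquad : ∑ i, ∑ j, c i * c j * ((1 - Real.exp (-γ * f (x i) (x j))) / γ)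
      = -(∑ i, ∑ j, c i * c j * Real.exp (-γ * f (x i) (x j))) / γ := by
    have hone : ∑ i, ∑ j, c i * c j = 0 := by simp [← sum_mul_sum, hc]
    simp only [mul_div_assoc', mul_sub, mul_one, sub_div, sum_sub_distrib, ← sum_div, hone]
    ring
  rw [hquad]
  exact div_nonpos_of_nonpos_of_nonneg (neg_nonpos.2 ((h γ hγ).2 m x c)) hγ.le

theorem IsNegDefKernel.isPosDefKernel_centered {X : Type*} {f : X → X → ℝ}
    (hf : IsNegDefKernel f) (x₀ : X) :
    IsPosDefKernel fun x y => (f x x₀ + f y x₀ - f x y - f x₀ x₀) / 2 := by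
  refine ⟨fun x y => by dsimp only; rw [hf.1 x y]; ring, fun m x c => ?_⟩
  set S := ∑ i, c i
  set A := ∑ i, c i * f (x i) x₀
  set T := ∑ i, ∑ j, c i * c j * f (x i) (x j)
  -- adjoin `x₀` with weight `-S` to get coefficients summing to zero
  let x' : Fin (m + 1) → X := Fin.snoc x x₀
  let c' : Fin (m + 1) → ℝ := Fin.snoc c (-S)
  have hext := hf.2 (m + 1) x' c' (by simp [c', Fin.sum_univ_castSucc, S])
  have hext_eq :
      ∑ i, ∑ j, c' i * c' j * f (x' i) (x' j) = T - 2 * S * A + S ^ 2 * f x₀ x₀ := by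
    simp only [x', c', Fin.sum_univ_castSucc, Fin.snoc_castSucc, Fin.snoc_last, sum_add_distrib,
      hf.1 x₀]
    simp only [mul_comm (c _) (-S), mul_assoc (-S), ← mul_sum]
    ring
  have hcen_eq :
      ∑ i, ∑ j, c i * c j * ((f (x i) x₀ + f (x j) x₀ - f (x i) (x j) - f x₀ x₀) / 2)
        = (2 * S * A - T - S ^ 2 * f x₀ x₀) / 2 := by
    have hterm : ∀ i j,
        c i * c j * ((f (x i) x₀ + f (x j) x₀ - f (x i) (x j) - f x₀ x₀) / 2) =
          (c i * f (x i) x₀ * c j + c i * (c j * f (x j) x₀) - c i * c j * f (x i) (x j)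
              - c i * c j * f x₀ x₀) / 2 := fun i j => by ring
    simp only [hterm, ← sum_div, sum_add_distrib, sum_sub_distrib, ← mul_sum, ← sum_mul]
    ring
  rw [hcen_eq]
  linarith

theorem IsPosDefKernel.sum_finset_nonneg {X : Type*} {k : X → X → ℝ} (hk : IsPosDefKernel k)
    (s : Finset X) (c : X → ℝ) : 0 ≤ ∑ a ∈ s, ∑ b ∈ s, c a * c b * k a b := by
  have e := s.equivFin.symm
  simpa only [← sum_coe_sort s, ← e.sum_comp] using
    hk.2 s.card (fun i => e i) (fun i => c (e i))

-- Mathlib's reproducing kernel Hilbert spaces are built from operator-valued kernels.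
theorem IsPosDefKernel.posSemidef_algebraMap {X : Type*} {k : X → X → ℝ}
    (hk : IsPosDefKernel k) :
    (Matrix.of fun x y => algebraMap ℝ (ℝ →L[ℝ] ℝ) (k x y)).PosSemidef := by
  have h := (RKHS.posSemidef_tfae (𝕜 := ℝ) (V := ℝ)
    (K := Matrix.of fun x y => algebraMap ℝ (ℝ →L[ℝ] ℝ) (k x y))).out 2 0
  refine h.mp ⟨?_, fun c => ?_⟩
  · ext x y : 2
    simp [← algebraMap_star_comm, hk.1 x y]
  · simpa [Finsupp.sum, hk.1, mul_comm, mul_left_comm] using hk.sum_finset_nonneg c.support c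

theorem IsPosDefKernel.exists_inner_eq {X : Type u} {k : X → X → ℝ} (hk : IsPosDefKernel k) :
    ∃ (H : Type u) (_ : NormedAddCommGroup H) (_ : InnerProductSpace ℝ H) (φ : X → H),
      ∀ x y, inner ℝ (φ x) (φ y) = k x y := by
  let K : Matrix X X (ℝ →L[ℝ] ℝ) :=
    Matrix.of fun x y => algebraMap ℝ (ℝ →L[ℝ] ℝ) (k x y)
  have : Fact K.PosSemidef := ⟨hk.posSemidef_algebraMap⟩
  refine ⟨RKHS.OfKernel K, inferInstance, inferInstance,
    fun x => RKHS.kerFun (RKHS.OfKernel K) x 1, fun x y => ?_⟩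
  rw [← RKHS.kernel_inner, RKHS.OfKernel.kernel_ofKernel]
  simp [K, hk.1 x y]

theorem IsNegDefKernel.exists_norm_sub_sq_eq {X : Type u} {f : X → X → ℝ}
    (hf : IsNegDefKernel f) (hf₀ : ∀ x, f x x = 0) :
    ∃ (V : Type u) (_ : NormedAddCommGroup V) (_ : InnerProductSpace ℝ V) (ψ : X → V),
      ∀ x y, f x y = ‖ψ x - ψ y‖ ^ 2 := by
  rcases isEmpty_or_nonempty X with _ | ⟨⟨x₀⟩⟩
  · exact ⟨PUnit, inferInstance, inferInstance, isEmptyElim, isEmptyElim⟩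
  obtain ⟨V, _, _, ψ, hψ⟩ := (hf.isPosDefKernel_centered x₀).exists_inner_eq
  refine ⟨V, inferInstance, inferInstance, ψ, fun x y => ?_⟩
  rw [norm_sub_sq_real, ← real_inner_self_eq_norm_sq, ← real_inner_self_eq_norm_sq]
  simp only [hψ, hf₀]
  ring

theorem hilbert_embedding_of_gaussian_posdef
    {M : Type u} [MetricSpace M]
    (h : ∀ γ : ℝ, 0 < γ →
      IsPosDefKernel (fun x y : M => Real.exp (-γ * dist x y ^ 2))) :
    ∃ (V : Type u) (_ : NormedAddCommGroup V) (_ : InnerProductSpace ℝ V)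
      (ψ : M → V), ∀ x y : M, dist x y = ‖ψ x - ψ y‖ := by
  obtain ⟨V, _, _, ψ, hψ⟩ :=
    (IsNegDefKernel.of_isPosDefKernel_exp h).exists_norm_sub_sq_eq (fun x => by simp)
  refine ⟨V, inferInstance, inferInstance, ψ, fun x y => ?_⟩
  rw [← sq_eq_sq₀ dist_nonneg (norm_nonneg _), hψ]
end

section
/- The log-Euclidean Gaussian kernel k(S₁,S₂) := exp(−γ ‖log S₁ − log S₂‖_F²) on the set of d × d real symmetric positive definite matrices is a positive definite kernel for every γ > 0. -/
open Matrix

/-- The (unique symmetric) logarithm of a symmetric positive definite matrix, defined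
via the spectral decomposition: log S = U diag(log λᵢ) Uᵀ. -/
noncomputable def spdLog {d : ℕ} {S : Matrix (Fin d) (Fin d) ℝ} (hS : S.IsHermitian) :
    Matrix (Fin d) (Fin d) ℝ :=
  (hS.eigenvectorUnitary : Matrix (Fin d) (Fin d) ℝ) *
    diagonal (fun i => Real.log (hS.eigenvalues i)) *
    star (hS.eigenvectorUnitary : Matrix (Fin d) (Fin d) ℝ)

/-- Squared Frobenius distance between two matrices. -/
def frobSqDist {d : ℕ} (A B : Matrix (Fin d) (Fin d) ℝ) : ℝ :=
  ∑ i, ∑ j, (A i j - B i j) ^ 2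

lemma gram_pow_nonneg {m : ℕ} {ι : Type*} [Fintype ι] (u : Fin m → ι → ℝ)
    (b : Fin m → ℝ) (n : ℕ) :
    0 ≤ ∑ i, ∑ j, b i * b j * (∑ p, u i p * u j p) ^ n := by
  have key : ∀ i j : Fin m, (∑ p, u i p * u j p) ^ n
      = ∑ f ∈ Fintype.piFinset (fun _ : Fin n => (Finset.univ : Finset ι)),
          (∏ k, u i (f k)) * (∏ k, u j (f k)) := by
    intro i j
    have h1 : (∑ p, u i p * u j p) ^ n = ∏ _k : Fin n, ∑ p, u i p * u j p := by
      rw [Finset.prod_const, Finset.card_univ, Fintype.card_fin]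
    rw [h1, Finset.prod_univ_sum]
    exact Finset.sum_congr rfl fun f _ => by rw [Finset.prod_mul_distrib]
  simp_rw [key, Finset.mul_sum]
  have h3 : ∑ i : Fin m, ∑ j : Fin m,
        ∑ f ∈ Fintype.piFinset (fun _ : Fin n => (Finset.univ : Finset ι)),
          b i * b j * ((∏ k, u i (f k)) * ∏ k, u j (f k))
      = ∑ f ∈ Fintype.piFinset (fun _ : Fin n => (Finset.univ : Finset ι)),
          ∑ i : Fin m, ∑ j : Fin m,
          b i * b j * ((∏ k, u i (f k)) * ∏ k, u j (f k)) :=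
    Eq.trans (Finset.sum_congr rfl fun i _ => Finset.sum_comm)
      (Finset.sum_comm)
  rw [h3]
  refine Finset.sum_nonneg fun f _ => ?_
  have h2 : ∑ i, ∑ j, b i * b j * ((∏ k, u i (f k)) * ∏ k, u j (f k))
      = (∑ i, b i * ∏ k, u i (f k)) * (∑ i, b i * ∏ k, u i (f k)) := by
    rw [Finset.sum_mul_sum]
    exact Finset.sum_congr rfl fun i _ => Finset.sum_congr rfl fun j _ => by ring
  rw [h2]
  exact mul_self_nonneg _

open Nat in
lemma exp_inner_kernel_nonneg {m : ℕ} {ι : Type*} [Fintype ι] (t : ℝ) (ht : 0 ≤ t)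
    (u : Fin m → ι → ℝ) (b : Fin m → ℝ) :
    0 ≤ ∑ i, ∑ j, b i * b j * Real.exp (t * ∑ p, u i p * u j p) := by
  have hexp : ∀ x : ℝ, Real.exp x = ∑' n : ℕ, x ^ n / n ! := by
    intro x
    rw [Real.exp_eq_exp_ℝ, NormedSpace.exp_eq_tsum_div]
  simp_rw [hexp]
  have hs : ∀ i j : Fin m,
      Summable (fun n : ℕ => b i * b j * ((t * ∑ p, u i p * u j p) ^ n / n !)) :=
    fun i j => (Real.summable_pow_div_factorial _).mul_left _
  have htsum : ∀ i j : Fin m, b i * b j * ∑' n : ℕ, (t * ∑ p, u i p * u j p) ^ n / n !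
      = ∑' n : ℕ, b i * b j * ((t * ∑ p, u i p * u j p) ^ n / n !) := by
    intro i j
    rw [tsum_mul_left]
  simp_rw [htsum]
  have h1 : ∀ i : Fin m,
      ∑ j, ∑' n : ℕ, b i * b j * ((t * ∑ p, u i p * u j p) ^ n / n !)
      = ∑' n : ℕ, ∑ j, b i * b j * ((t * ∑ p, u i p * u j p) ^ n / n !) :=
    fun i => (Summable.tsum_finsetSum (fun j _ => hs i j)).symm
  simp_rw [h1]
  rw [← Summable.tsum_finsetSum (fun i _ => summable_sum (fun j _ => hs i j))]
  refine tsum_nonneg fun n => ?_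
  have heq : ∑ i, ∑ j, b i * b j * ((t * ∑ p, u i p * u j p) ^ n / n !)
      = (t ^ n / n !) * ∑ i, ∑ j, b i * b j * (∑ p, u i p * u j p) ^ n := by
    rw [Finset.mul_sum]
    refine Finset.sum_congr rfl fun i _ => ?_
    rw [Finset.mul_sum]
    refine Finset.sum_congr rfl fun j _ => ?_
    rw [mul_pow]; ring
  rw [heq]
  exact mul_nonneg (div_nonneg (pow_nonneg ht n) (Nat.cast_nonneg _)) (gram_pow_nonneg u b n)

theorem logEuclidean_gaussian_kernel_posdef (d : ℕ) (γ : ℝ) (hγ : 0 < γ) :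
    IsPosDefKernel (fun S₁ S₂ : {S : Matrix (Fin d) (Fin d) ℝ // S.PosDef} =>
      Real.exp (-γ * frobSqDist (spdLog S₁.2.1) (spdLog S₂.2.1))) := by
  constructor
  · intro S₁ S₂
    simp only
    have h : frobSqDist (spdLog S₁.2.1) (spdLog S₂.2.1)
        = frobSqDist (spdLog S₂.2.1) (spdLog S₁.2.1) := by
      unfold frobSqDist
      exact Finset.sum_congr rfl fun i _ => Finset.sum_congr rfl fun j _ => by ring
    rw [h]
  · intro m x c
    set u : Fin m → (Fin d × Fin d) → ℝ := fun i p => spdLog (x i).2.1 p.1 p.2 with hu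
    have hfrob : ∀ i j : Fin m, frobSqDist (spdLog (x i).2.1) (spdLog (x j).2.1)
        = (∑ p, u i p ^ 2) + (∑ p, u j p ^ 2) - 2 * ∑ p, u i p * u j p := by
      intro i j
      simp only [Fintype.sum_prod_type, frobSqDist, hu]
      rw [Finset.mul_sum, ← Finset.sum_add_distrib, ← Finset.sum_sub_distrib]
      refine Finset.sum_congr rfl fun a _ => ?_
      rw [Finset.mul_sum, ← Finset.sum_add_distrib, ← Finset.sum_sub_distrib]
      refine Finset.sum_congr rfl fun b _ => ?_
      ring
    have hk : ∀ i j : Fin m,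
        c i * c j * Real.exp (-γ * frobSqDist (spdLog (x i).2.1) (spdLog (x j).2.1))
        = (c i * Real.exp (-γ * ∑ p, u i p ^ 2)) * (c j * Real.exp (-γ * ∑ p, u j p ^ 2))
          * Real.exp ((2 * γ) * ∑ p, u i p * u j p) := by
      intro i j
      rw [hfrob i j,
        show -γ * ((∑ p, u i p ^ 2) + (∑ p, u j p ^ 2) - 2 * ∑ p, u i p * u j p)
          = (-γ * ∑ p, u i p ^ 2) + (-γ * ∑ p, u j p ^ 2) + (2 * γ) * ∑ p, u i p * u j p
          from by ring,
        Real.exp_add, Real.exp_add]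
      ring
    simp only
    simp_rw [hk]
    exact exp_inner_kernel_nonneg (2 * γ) (by linarith) u
      (fun i => c i * Real.exp (-γ * ∑ p, u i p ^ 2))
end
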